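/- arXiv:2004.02209 — 2 statements merged into one kernel-verified Lean document; each statement's English description precedes it below -/
import Mathlib

section
/- (The more fire, the bigger the blaze.) Let (S_x, I_x) and (S_y, I_y) be SIR trajectories without intervention, with the same parameters β and γ, defined on [t_x, ∞) and [t_y, ∞) respectively. If 0 ≤ I_x(t_x) ≤ I_y(t_y) and S_x(t_x) = S_y(t_y), then Imax_x(t_x) ≤ Imax_y(t_y), with equality only if I_x(t_x) = I_y(t_y). -/
noncomputable section

/-- SIR parameters: β > γ > 0. -/
structure SIRParams where
  β : ℝ
  γ : ℝ
  hγ : 0 < γ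
  hβγ : γ < β

/-- Basic reproduction number R0 = β/γ. -/
def SIRParams.R0 (p : SIRParams) : ℝ := p.β / p.γ

/-- Critical susceptible fraction Scrit = γ/β = 1/R0. -/
def SIRParams.Scrit (p : SIRParams) : ℝ := p.γ / p.β

/-- An intervention with start time `ti` and duration `τ`: a right-continuous
function `b : ℝ → [0,1]` with finitely many discontinuity points such that
`b t = 1` for all `t ∉ [ti, ti + τ]`. -/
structure Intervention (p : SIRParams) where
  b : ℝ → ℝ
  ti : ℝ
  τ : ℝ
  hτ : 0 < τ
  mem_Icc : ∀ t, b t ∈ Set.Icc (0 : ℝ) 1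
  rightCont : ∀ t, ContinuousWithinAt b (Set.Ici t) t
  finiteDisc : {t : ℝ | ¬ ContinuousAt b t}.Finite
  outside : ∀ t, t ∉ Set.Icc ti (ti + τ) → b t = 1

/-- The null intervention b ≡ 1. -/
def nullB : ℝ → ℝ := fun _ => 1

/-- An SIR trajectory under transmission-reduction function `b` on a set `J ⊆ ℝ`
(an interval unbounded above, encoded as being upward closed): a pair of
continuous functions `S, I : ℝ → ℝ` with `0 < S ≤ 1`, `0 ≤ I`, `S + I ≤ 1` on `J`,
satisfying the integral form of the SIR equations. -/
structure IsSIRTrajectory (p : SIRParams) (b : ℝ → ℝ) (J : Set ℝ) (S I : ℝ → ℝ) : Prop where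
  upClosed : ∀ t ∈ J, ∀ s, t ≤ s → s ∈ J
  contS : ContinuousOn S J
  contI : ContinuousOn I J
  Spos : ∀ t ∈ J, 0 < S t
  Sle_one : ∀ t ∈ J, S t ≤ 1
  Inonneg : ∀ t ∈ J, 0 ≤ I t
  sum_le_one : ∀ t ∈ J, S t + I t ≤ 1
  S_eq : ∀ t0 ∈ J, ∀ t ∈ J, t0 ≤ t →
    S t = S t0 - ∫ s in t0..t, b s * p.β * S s * I s
  I_eq : ∀ t0 ∈ J, ∀ t ∈ J, t0 ≤ t →
    I t = I t0 + ∫ s in t0..t, (b s * p.β * S s * I s - p.γ * I s)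

/-- `ImaxAt J I t = sup_{x ≥ t, x ∈ J} I x`. -/
def ImaxAt (J : Set ℝ) (I : ℝ → ℝ) (t : ℝ) : ℝ := sSup (I '' (J ∩ Set.Ici t))

/-- Reference emerging-epidemic trajectory: an SIR trajectory without
intervention on ℝ with I₁ > 0 everywhere, S₁ → 1 and I₁ → 0 as t → −∞. -/
def IsReference (p : SIRParams) (S1 I1 : ℝ → ℝ) : Prop :=
  IsSIRTrajectory p nullB Set.univ S1 I1 ∧
  (∀ t, 0 < I1 t) ∧
  Filter.Tendsto S1 Filter.atBot (nhds 1) ∧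
  Filter.Tendsto I1 Filter.atBot (nhds 0)

/-- The controlled trajectory of intervention `bi`: the SIR trajectory under
`bi.b` on ℝ coinciding with the reference trajectory `(S1, I1)` on `(−∞, bi.ti]`. -/
def IsControlled (p : SIRParams) (S1 I1 : ℝ → ℝ) (bi : Intervention p)
    (S I : ℝ → ℝ) : Prop :=
  IsSIRTrajectory p bi.b Set.univ S I ∧ ∀ t ≤ bi.ti, S t = S1 t ∧ I t = I1 t

/-- Global peak prevalence of a controlled trajectory: `Imax = sup_{t ∈ ℝ} I t`. -/
def Imax (I : ℝ → ℝ) : ℝ := sSup (Set.range I)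

/-- An intervention `bs` (with controlled trajectory `(Sb, Ib)`) is optimal for
its duration if its peak prevalence is at most that of any intervention of the
same duration (with any start time). -/
def IsOptimal (p : SIRParams) (S1 I1 : ℝ → ℝ) (bs : Intervention p)
    (Sb Ib : ℝ → ℝ) : Prop :=
  IsControlled p S1 I1 bs Sb Ib ∧
  ∀ (b : Intervention p), b.τ = bs.τ →
    ∀ S I : ℝ → ℝ, IsControlled p S1 I1 b S I → Imax Ib ≤ Imax I

/-- A maintain–suppress intervention with maintenance fraction `f ∈ [0,1]`:
`b t = γ/(β·S t)` on `[ti, ti + f·τ)` and `b t = 0` on `[ti + f·τ, ti + τ]`,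
where `S` is the controlled trajectory's susceptible fraction. -/
def IsMaintainSuppress (p : SIRParams) (bi : Intervention p) (f : ℝ)
    (S : ℝ → ℝ) : Prop :=
  f ∈ Set.Icc (0 : ℝ) 1 ∧
  (∀ t ∈ Set.Ico bi.ti (bi.ti + f * bi.τ), bi.b t = p.γ / (p.β * S t)) ∧
  (∀ t ∈ Set.Icc (bi.ti + f * bi.τ) (bi.ti + bi.τ), bi.b t = 0)

/-- A full suppression intervention: `b t = 0` throughout `[ti, ti + τ]`. -/
def IsFullSuppression (p : SIRParams) (bi : Intervention p) : Prop :=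
  ∀ t ∈ Set.Icc bi.ti (bi.ti + bi.τ), bi.b t = 0

/-- A fixed control intervention with strictness `σ ∈ [0,1]`: `b t = σ`
throughout `[ti, ti + τ]`. -/
def IsFixedControl (p : SIRParams) (bi : Intervention p) (σ : ℝ) : Prop :=
  σ ∈ Set.Icc (0 : ℝ) 1 ∧ ∀ t ∈ Set.Icc bi.ti (bi.ti + bi.τ), bi.b t = σ

/-!
Along a trajectory without intervention `S` decreases and `I + S - Scrit · log S` is conserved.
Since `s ↦ s₀ - s + Scrit · log (s / s₀)` is maximal at `s = Scrit`, this gives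
`I t ≤ I t₀ + g (S t₀)` with `g s₀ = s₀ - Scrit + Scrit · log (Scrit / s₀)` if `s₀ > Scrit`
and `g s₀ = 0` otherwise. If `I t₀ > 0`, then `S` eventually falls to `Scrit`, so the bound is
attained: the peak is `I t₀ + g (S t₀)`, which for fixed `S t₀` is strictly increasing in `I t₀`.
If `I t₀ = 0`, Grönwall's inequality gives `I ≡ 0`.
-/

open Set Real intervalIntegral

theorem hasDerivWithinAt_Ici_integral_of_continuousOn {E : Type*} [NormedAddCommGroup E]
    [NormedSpace ℝ E] [CompleteSpace E] {f : ℝ → E} {a b : ℝ} (hf : ContinuousOn f (Ici a))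
    (hab : a ≤ b) : HasDerivWithinAt (fun u => ∫ x in a..u, f x) (f b) (Ici b) b := by
  have hIoi : Ioi b ⊆ Ici a := fun _ hx => hab.trans hx.le
  refine integral_hasDerivWithinAt_right (t := Ioi b) ((hf.mono ?_).intervalIntegrable)
    ((hf.mono hIoi).stronglyMeasurableAtFilter_nhdsWithin measurableSet_Ioi b)
    ((hf b hab).mono hIoi)
  rw [uIcc_of_le hab]
  exact Icc_subset_Ici_self

namespace SIRParams

variable (p : SIRParams)

theorem β_pos : 0 < p.β := p.hγ.trans p.hβγ

theorem Scrit_pos : 0 < p.Scrit := div_pos p.hγ p.β_pos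

theorem β_mul_Scrit : p.β * p.Scrit = p.γ := mul_div_cancel₀ _ p.β_pos.ne'

def invariant (s i : ℝ) : ℝ := i + s - p.Scrit * log s

end SIRParams

/-- The rise of `I` from a state with `S = s₀` to the epidemic peak, which is reached when `S`
has fallen to `c = Scrit` (no rise if `s₀ ≤ c`). -/
def peakGain (c s₀ : ℝ) : ℝ := if c < s₀ then s₀ - c + c * log (c / s₀) else 0

theorem sub_add_mul_log_div_le_peakGain {c s₀ s : ℝ} (hc : 0 < c) (hs : 0 < s) (hss₀ : s ≤ s₀) :
    s₀ - s + c * log (s / s₀) ≤ peakGain c s₀ := by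
  have hs₀ : 0 < s₀ := hs.trans_le hss₀
  unfold peakGain
  split_ifs with hcs₀
  · have hlog : c * log (s / c) ≤ s - c := by
      have := mul_le_mul_of_nonneg_left (log_le_sub_one_of_pos (div_pos hs hc)) hc.le
      rwa [mul_sub, mul_div_cancel₀ _ hc.ne', mul_one] at this
    rw [log_div hs.ne' hc.ne'] at hlog
    rw [log_div hs.ne' hs₀.ne', log_div hc.ne' hs₀.ne']
    linarith
  · have hlog := mul_le_mul_of_nonneg_left (log_le_sub_one_of_pos (div_pos hs hs₀)) hc.le
    have : c * (s / s₀ - 1) ≤ s - s₀ := by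
      rw [div_sub_one hs₀.ne', mul_div_assoc', div_le_iff₀ hs₀]
      nlinarith
    linarith

namespace IsSIRTrajectory

variable {p : SIRParams} {t₀ t : ℝ} {S I : ℝ → ℝ}
  (h : IsSIRTrajectory p nullB (Ici t₀) S I)
include h

theorem antitoneOn_S : AntitoneOn S (Ici t₀) := by
  intro a ha b hb hab
  rw [h.S_eq a ha b hb hab, sub_le_self_iff]
  refine integral_nonneg hab fun u hu => ?_
  have hu₀ : u ∈ Ici t₀ := le_trans ha hu.1
  simp only [nullB, one_mul]
  exact mul_nonneg (mul_nonneg p.β_pos.le (h.Spos u hu₀).le) (h.Inonneg u hu₀)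

theorem hasDerivWithinAt_S (ht : t₀ ≤ t) :
    HasDerivWithinAt S (-(p.β * S t * I t)) (Ici t) t := by
  have hF : ContinuousOn (fun u => nullB u * p.β * S u * I u) (Ici t₀) := by
    simp only [nullB, one_mul]
    exact (continuousOn_const.mul h.contS).mul h.contI
  have hSeq u (hu : u ∈ Ici t) := h.S_eq t₀ self_mem_Ici u (ht.trans hu) (ht.trans hu)
  refine (((hasDerivWithinAt_Ici_integral_of_continuousOn hF ht).const_sub (S t₀)).congr hSeq
    (hSeq t self_mem_Ici)).congr_deriv ?_
  simp only [nullB, one_mul]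

theorem hasDerivWithinAt_I (ht : t₀ ≤ t) :
    HasDerivWithinAt I ((p.β * S t - p.γ) * I t) (Ici t) t := by
  have hF : ContinuousOn (fun u => nullB u * p.β * S u * I u - p.γ * I u) (Ici t₀) := by
    simp only [nullB, one_mul]
    exact ((continuousOn_const.mul h.contS).mul h.contI).sub (continuousOn_const.mul h.contI)
  have hIeq u (hu : u ∈ Ici t) := h.I_eq t₀ self_mem_Ici u (ht.trans hu) (ht.trans hu)
  refine (((hasDerivWithinAt_Ici_integral_of_continuousOn hF ht).const_add (I t₀)).congr hIeq
    (hIeq t self_mem_Ici)).congr_deriv ?_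
  simp only [nullB, one_mul]
  ring

theorem invariant_eq (ht : t₀ ≤ t) : p.invariant (S t) (I t) = p.invariant (S t₀) (I t₀) := by
  refine constant_of_has_deriv_right_zero (f := fun u => p.invariant (S u) (I u)) ?_ ?_ t
    ⟨ht, le_rfl⟩
  · exact ((h.contI.add h.contS).sub (continuousOn_const.mul
      (h.contS.log fun u hu => (h.Spos u hu).ne'))).mono Icc_subset_Ici_self
  · intro u hu
    have hSu := h.Spos u hu.1
    refine (((h.hasDerivWithinAt_I hu.1).add (h.hasDerivWithinAt_S hu.1)).sub
      (((h.hasDerivWithinAt_S hu.1).log hSu.ne').const_mul p.Scrit)).congr_deriv ?_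
    have := p.β_mul_Scrit
    field_simp
    linear_combination I u * this

theorem I_le_add_peakGain (ht : t₀ ≤ t) : I t ≤ I t₀ + peakGain p.Scrit (S t₀) := by
  have hSt := h.Spos t ht
  have hgain := sub_add_mul_log_div_le_peakGain p.Scrit_pos hSt
    (h.antitoneOn_S self_mem_Ici ht ht)
  have hinv := h.invariant_eq ht
  rw [log_div hSt.ne' (h.Spos t₀ self_mem_Ici).ne'] at hgain
  unfold SIRParams.invariant at hinv
  linarith

theorem I_eq_zero_of_eq_zero (h0 : I t₀ = 0) (ht : t₀ ≤ t) : I t = 0 := by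
  refine eq_zero_of_abs_deriv_le_mul_abs_self_of_eq_zero_right (K := p.β + p.γ)
    (h.contI.mono Icc_subset_Ici_self)
    (fun u hu => h.hasDerivWithinAt_I hu.1) h0 (fun u hu => ?_) t ⟨ht, le_rfl⟩
  have hS0 := (h.Spos u hu.1).le
  have hS1 := h.Sle_one u hu.1
  rw [norm_mul]
  gcongr
  rw [Real.norm_eq_abs, abs_le]
  constructor <;> nlinarith [p.hγ, p.β_pos]

/- If `S` stayed above `Scrit`, `I` would never drop below `I t₀`, so `S` would fall at rate at
least `γ · I t₀` and reach `0` by time `T`. -/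
theorem exists_S_le_Scrit (h0 : 0 < I t₀) : ∃ t ≥ t₀, S t ≤ p.Scrit := by
  by_contra! hS
  have hI u (hu : t₀ ≤ u) : I t₀ ≤ I u := by
    rw [h.I_eq t₀ self_mem_Ici u hu hu, le_add_iff_nonneg_right]
    refine integral_nonneg hu fun v hv => ?_
    have hv₀ : t₀ ≤ v := hv.1
    have : p.γ ≤ p.β * S v := p.β_mul_Scrit ▸ mul_le_mul_of_nonneg_left (hS v hv₀).le p.β_pos.le
    simp only [nullB, one_mul, ← sub_mul]
    exact mul_nonneg (by linarith) (h.Inonneg v hv₀)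
  set T := t₀ + S t₀ / (p.γ * I t₀)
  have hT : t₀ ≤ T :=
    le_add_of_nonneg_right (div_nonneg (h.Spos t₀ self_mem_Ici).le (mul_pos p.hγ h0).le)
  have hint : (T - t₀) * (p.γ * I t₀) ≤ ∫ u in t₀..T, nullB u * p.β * S u * I u := by
    rw [← smul_eq_mul, ← integral_const]
    refine integral_mono_on hT intervalIntegrable_const ?_ fun v hv => ?_
    · refine ContinuousOn.intervalIntegrable ?_
      simp only [nullB, one_mul]
      exact ((continuousOn_const.mul h.contS).mul h.contI).mono (by
        rw [uIcc_of_le hT]; exact Icc_subset_Ici_self)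
    · have hv₀ : t₀ ≤ v := hv.1
      rw [nullB, one_mul, ← p.β_mul_Scrit]
      have := mul_le_mul_of_nonneg_left (hS v hv₀).le p.β_pos.le
      exact mul_le_mul this (hI v hv₀) h0.le
        (mul_nonneg p.β_pos.le (h.Spos v hv₀).le)
  have hST := h.S_eq t₀ self_mem_Ici T hT hT
  have : (T - t₀) * (p.γ * I t₀) = S t₀ := by
    simp only [T, add_sub_cancel_left]
    field_simp [p.hγ.ne', h0.ne']
  linarith [h.Spos T hT]

theorem exists_I_eq_add_peakGain (h0 : 0 < I t₀) :
    ∃ t ≥ t₀, I t = I t₀ + peakGain p.Scrit (S t₀) := by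
  unfold peakGain
  split_ifs with hc
  · obtain ⟨t₁, ht₁, hSt₁⟩ := h.exists_S_le_Scrit h0
    obtain ⟨t, ht, hSt⟩ := intermediate_value_Icc' ht₁ (h.contS.mono Icc_subset_Ici_self)
      ⟨hSt₁, hc.le⟩
    refine ⟨t, ht.1, ?_⟩
    have hinv := h.invariant_eq ht.1
    unfold SIRParams.invariant at hinv
    rw [hSt] at hinv
    rw [log_div p.Scrit_pos.ne' (h.Spos t₀ self_mem_Ici).ne']
    linarith
  · exact ⟨t₀, le_rfl, (add_zero _).symm⟩

theorem imaxAt_eq (h0 : 0 < I t₀) :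
    ImaxAt (Ici t₀) I t₀ = I t₀ + peakGain p.Scrit (S t₀) := by
  rw [ImaxAt, inter_self]
  obtain ⟨t, ht, hIt⟩ := h.exists_I_eq_add_peakGain h0
  exact IsGreatest.csSup_eq ⟨⟨t, ht, hIt⟩, by rintro _ ⟨u, hu, rfl⟩; exact h.I_le_add_peakGain hu⟩

theorem imaxAt_eq_zero (h0 : I t₀ = 0) : ImaxAt (Ici t₀) I t₀ = 0 := by
  rw [ImaxAt, inter_self]
  refine IsGreatest.csSup_eq ⟨⟨t₀, self_mem_Ici, h0⟩, ?_⟩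
  rintro _ ⟨u, hu, rfl⟩
  exact (h.I_eq_zero_of_eq_zero h0 hu).le

theorem le_imaxAt : I t₀ ≤ ImaxAt (Ici t₀) I t₀ := by
  rw [ImaxAt, inter_self]
  refine le_csSup ⟨I t₀ + peakGain p.Scrit (S t₀), ?_⟩ ⟨t₀, self_mem_Ici, rfl⟩
  rintro _ ⟨u, hu, rfl⟩
  exact h.I_le_add_peakGain hu

end IsSIRTrajectory

/-- The more fire, the bigger the blaze: starting from equal
susceptible fractions, a larger infectious fraction yields a larger peak. -/
theorem more_fire_bigger_blaze (p : SIRParams) (tx ty : ℝ)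
    (Sx Ix Sy Iy : ℝ → ℝ)
    (hx : IsSIRTrajectory p nullB (Set.Ici tx) Sx Ix)
    (hy : IsSIRTrajectory p nullB (Set.Ici ty) Sy Iy)
    (hI0 : 0 ≤ Ix tx) (hIle : Ix tx ≤ Iy ty) (hSeq : Sx tx = Sy ty) :
    ImaxAt (Set.Ici tx) Ix tx ≤ ImaxAt (Set.Ici ty) Iy ty ∧
    (ImaxAt (Set.Ici tx) Ix tx = ImaxAt (Set.Ici ty) Iy ty → Ix tx = Iy ty) := by
  rcases hI0.eq_or_lt with h0 | h0
  · have := hy.le_imaxAt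
    rw [hx.imaxAt_eq_zero h0.symm]
    exact ⟨by linarith, fun _ => by linarith⟩
  · rw [hx.imaxAt_eq h0, hy.imaxAt_eq (h0.trans_le hIle), hSeq]
    exact ⟨by linarith, fun _ => by linarith⟩
end
end

section
/- (More fire, less fuel.) Let b_x and b_y be two interventions, both with start time t_i and duration τ, and set t_f = t_i + τ. Let (S_x, I_x) and (S_y, I_y) be SIR trajectories under b_x and b_y respectively, defined on [t_i, ∞), with the same initial state: S_x(t_i) = S_y(t_i) and I_x(t_i) = I_y(t_i). If I_x(t) ≥ I_y(t) for all t ∈ [t_i, t_f] and I_x(t) > I_y(t) for some t ∈ (t_i, t_f), then S_x(t_f) < S_y(t_f). -/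
noncomputable section

/-! Summing the two SIR equations gives `(S + I)(c) = (S + I)(a) - γ ∫ₐᶜ I`. A trajectory that
carries at least as many infectious individuals at all times, strictly more at some time,
therefore loses strictly more of `S + I` over the intervention window; since it also ends with
at least as many infectious individuals, it must end with strictly fewer susceptibles. -/

open MeasureTheory Set intervalIntegral

theorem aestronglyMeasurable_of_countable_not_continuousAt {α E : Type*} [TopologicalSpace α]
    [MeasurableSpace α] [OpensMeasurableSpace α] [MeasurableSingletonClass α]
    [TopologicalSpace E] [TopologicalSpace.PseudoMetrizableSpace E]
    [SecondCountableTopologyEither α E] {μ : Measure α} [NullSingletonClass μ]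
    {f : α → E} (hf : {x | ¬ ContinuousAt f x}.Countable) : AEStronglyMeasurable f μ := by
  have hcont : ∀ᵐ x ∂μ, x ∈ {x | ¬ ContinuousAt f x}ᶜ := compl_mem_ae_iff.2 (hf.measure_zero μ)
  rw [← Measure.restrict_eq_self_of_ae_mem hcont]
  exact ContinuousOn.aestronglyMeasurable (fun x hx => (not_not.1 hx).continuousWithinAt)
    hf.measurableSet.compl

namespace Intervention

variable {p : SIRParams} (bi : Intervention p)

theorem aestronglyMeasurable : AEStronglyMeasurable bi.b volume :=
  aestronglyMeasurable_of_countable_not_continuousAt bi.finiteDisc.countable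

theorem norm_le_one (t : ℝ) : ‖bi.b t‖ ≤ 1 := by
  obtain ⟨h0, h1⟩ := bi.mem_Icc t
  rw [Real.norm_eq_abs, abs_le]
  exact ⟨by linarith, h1⟩

end Intervention

namespace IsSIRTrajectory

variable {p : SIRParams} {b : ℝ → ℝ} {J : Set ℝ} {S I : ℝ → ℝ} {C a c : ℝ}

theorem Icc_subset (h : IsSIRTrajectory p b J S I) (ha : a ∈ J) : Icc a c ⊆ J :=
  fun t ht => h.upClosed a ha t ht.1

theorem intervalIntegrable_infection (h : IsSIRTrajectory p b J S I)
    (hb : AEStronglyMeasurable b volume) (hbC : ∀ t, ‖b t‖ ≤ C) (ha : a ∈ J) (hac : a ≤ c) :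
    IntervalIntegrable (fun s => b s * p.β * S s * I s) volume a c := by
  have hsub : Icc a c ⊆ J := h.Icc_subset ha
  have hSI : ContinuousOn (fun s => p.β * S s * I s) (Icc a c) :=
    (continuousOn_const.mul (h.contS.mono hsub)).mul (h.contI.mono hsub)
  rw [intervalIntegrable_iff_integrableOn_Icc_of_le hac]
  simpa only [IntegrableOn, mul_assoc] using
    (hSI.integrableOn_compact isCompact_Icc).bdd_mul hb.restrict (ae_of_all _ hbC)

theorem add_eq_sub_integral (h : IsSIRTrajectory p b J S I)
    (hb : AEStronglyMeasurable b volume) (hbC : ∀ t, ‖b t‖ ≤ C) (ha : a ∈ J) (hac : a ≤ c) :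
    S c + I c = S a + I a - ∫ s in a..c, p.γ * I s := by
  have hc : c ∈ J := h.upClosed a ha c hac
  have hγI : IntervalIntegrable (fun s => p.γ * I s) volume a c :=
    (continuousOn_const.mul (h.contI.mono (h.Icc_subset ha))).intervalIntegrable_of_Icc hac
  have hI := h.I_eq a ha c hc hac
  rw [integral_sub (h.intervalIntegrable_infection hb hbC ha hac) hγI] at hI
  linarith [h.S_eq a ha c hc hac]

theorem susceptible_lt_of_infectious_le {bx by' Sx Ix Sy Iy : ℝ → ℝ} {Cx Cy : ℝ}
    (hx : IsSIRTrajectory p bx J Sx Ix) (hy : IsSIRTrajectory p by' J Sy Iy)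
    (hbx : AEStronglyMeasurable bx volume) (hbxC : ∀ t, ‖bx t‖ ≤ Cx)
    (hby : AEStronglyMeasurable by' volume) (hbyC : ∀ t, ‖by' t‖ ≤ Cy)
    (ha : a ∈ J) (hac : a < c) (hS0 : Sx a = Sy a) (hI0 : Ix a = Iy a)
    (hge : ∀ t ∈ Icc a c, Iy t ≤ Ix t) (hgt : ∃ t ∈ Icc a c, Iy t < Ix t) :
    Sx c < Sy c := by
  have hsub : Icc a c ⊆ J := hx.Icc_subset ha
  have hlost : ∫ s in a..c, p.γ * Iy s < ∫ s in a..c, p.γ * Ix s := by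
    obtain ⟨t, ht, hlt⟩ := hgt
    refine integral_lt_integral_of_continuousOn_of_le_of_exists_lt hac
      (continuousOn_const.mul (hy.contI.mono hsub)) (continuousOn_const.mul (hx.contI.mono hsub))
      (fun s hs => mul_le_mul_of_nonneg_left (hge s (Ioc_subset_Icc_self hs)) p.hγ.le)
      ⟨t, ht, mul_lt_mul_of_pos_left hlt p.hγ⟩
  linarith [hx.add_eq_sub_integral hbx hbxC ha hac.le, hy.add_eq_sub_integral hby hbyC ha hac.le,
    hge c (right_mem_Icc.2 hac.le)]

end IsSIRTrajectory

theorem more_fire_less_fuel_general (p : SIRParams) (bx by' : Intervention p)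
    (Sx Ix Sy Iy : ℝ → ℝ)
    (hx : IsSIRTrajectory p bx.b (Set.Ici bx.ti) Sx Ix)
    (hy : IsSIRTrajectory p by'.b (Set.Ici bx.ti) Sy Iy)
    (hS0 : Sx bx.ti = Sy bx.ti) (hI0 : Ix bx.ti = Iy bx.ti)
    (hge : ∀ t ∈ Set.Icc bx.ti (bx.ti + bx.τ), Iy t ≤ Ix t)
    (hgt : ∃ t ∈ Set.Ioo bx.ti (bx.ti + bx.τ), Iy t < Ix t) :
    Sx (bx.ti + bx.τ) < Sy (bx.ti + bx.τ) := by
  obtain ⟨t, ht, hlt⟩ := hgt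
  exact hx.susceptible_lt_of_infectious_le hy bx.aestronglyMeasurable bx.norm_le_one
    by'.aestronglyMeasurable by'.norm_le_one self_mem_Ici (lt_add_of_pos_right _ bx.hτ)
    hS0 hI0 hge ⟨t, Ioo_subset_Icc_self ht, hlt⟩

/-- More fire, less fuel: if intervention `x` keeps at least as
many (and at some time strictly more) infectious individuals than intervention
`y` throughout, it ends with strictly fewer susceptibles. -/
theorem more_fire_less_fuel (p : SIRParams) (bx by' : Intervention p)
    (hti : by'.ti = bx.ti) (hτ : by'.τ = bx.τ)
    (Sx Ix Sy Iy : ℝ → ℝ)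
    (hx : IsSIRTrajectory p bx.b (Set.Ici bx.ti) Sx Ix)
    (hy : IsSIRTrajectory p by'.b (Set.Ici bx.ti) Sy Iy)
    (hS0 : Sx bx.ti = Sy bx.ti) (hI0 : Ix bx.ti = Iy bx.ti)
    (hge : ∀ t ∈ Set.Icc bx.ti (bx.ti + bx.τ), Iy t ≤ Ix t)
    (hgt : ∃ t ∈ Set.Ioo bx.ti (bx.ti + bx.τ), Iy t < Ix t) :
    Sx (bx.ti + bx.τ) < Sy (bx.ti + bx.τ) :=
  more_fire_less_fuel_general p bx by' Sx Ix Sy Iy hx hy hS0 hI0 hge hgt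
end
end
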